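/- In the coalescence setting (G is the coalescence of H₁ and H₂ via the non-isolated vertex x), if G is weak bicritical, then γ(G) = γ(H₁) + γ(H₂) − 1. -/
import Mathlib


open SimpleGraph Set

/-- `S` is a dominating set of the induced subgraph of `G` on the vertex set `A`:
`S ⊆ A` and every vertex of `A` is in the closed neighborhood of some vertex of `S`. -/
def IsDomOn {V : Type*} (G : SimpleGraph V) (A S : Set V) : Prop :=
  S ⊆ A ∧ ∀ v ∈ A, ∃ s ∈ S, s = v ∨ G.Adj s v

/-- The domination number of the induced subgraph of `G` on the vertex set `A`. -/
noncomputable def domNumOn {V : Type*} (G : SimpleGraph V) (A : Set V) : ℕ :=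
  sInf {n | ∃ S : Set V, IsDomOn G A S ∧ S.ncard = n}

/-- The domination number of `G`. -/
noncomputable def domNum {V : Type*} (G : SimpleGraph V) : ℕ :=
  domNumOn G Set.univ

/-- `y` is a critical vertex of the induced subgraph of `G` on `A`:
deleting `y` decreases the domination number. -/
def IsCritVertexOn {V : Type*} (G : SimpleGraph V) (A : Set V) (y : V) : Prop :=
  domNumOn G (A \ {y}) < domNumOn G A

/-- The induced subgraph of `G` on `A` is critical: all its vertices are critical. -/
def CriticalOn {V : Type*} (G : SimpleGraph V) (A : Set V) : Prop :=
  ∀ y ∈ A, IsCritVertexOn G A y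

/-- The induced subgraph of `G` on `A` is weak bicritical: no vertex deletion increases the
domination number (`V⁺ = ∅`), and deleting any vertex that keeps the domination number
unchanged (a vertex of `V⁰`) yields a critical graph. -/
def WeakBicriticalOn {V : Type*} (G : SimpleGraph V) (A : Set V) : Prop :=
  (∀ y ∈ A, domNumOn G (A \ {y}) ≤ domNumOn G A) ∧
  (∀ y ∈ A, domNumOn G (A \ {y}) = domNumOn G A → CriticalOn G (A \ {y}))

section Aux

variable {V : Type*} (G : SimpleGraph V)

lemma isDomOn_self (A : Set V) : IsDomOn G A A :=
  ⟨subset_rfl, fun v hv => ⟨v, hv, Or.inl rfl⟩⟩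

lemma domNumOn_le {A S : Set V} (h : IsDomOn G A S) : domNumOn G A ≤ S.ncard :=
  Nat.sInf_le ⟨S, h, rfl⟩

lemma exists_minDom (A : Set V) : ∃ S, IsDomOn G A S ∧ S.ncard = domNumOn G A := by
  have h : {n | ∃ S : Set V, IsDomOn G A S ∧ S.ncard = n}.Nonempty :=
    ⟨A.ncard, A, isDomOn_self G A, rfl⟩
  exact Nat.sInf_mem h

lemma domNumOn_le_diff_add_one [Finite V] (A : Set V) (y : V) :
    domNumOn G A ≤ domNumOn G (A \ {y}) + 1 := by
  obtain ⟨S, ⟨hSsub, hSdom⟩, hcard⟩ := exists_minDom G (A \ {y})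
  by_cases hy : y ∈ A
  · have hdom : IsDomOn G A (insert y S) := by
      constructor
      · intro s hs
        rcases hs with rfl | hs
        · exact hy
        · exact (hSsub hs).1
      · intro v hv
        by_cases hvy : v = y
        · exact ⟨y, mem_insert _ _, Or.inl hvy.symm⟩
        · obtain ⟨s, hs, h⟩ := hSdom v ⟨hv, hvy⟩
          exact ⟨s, mem_insert_of_mem _ hs, h⟩
    calc domNumOn G A ≤ (insert y S).ncard := domNumOn_le G hdom
      _ ≤ S.ncard + 1 := Set.ncard_insert_le _ _
      _ = _ := by rw [hcard]
  · rw [Set.diff_singleton_eq_self hy]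
    omega

lemma domNumOn_union [Finite V] {A1 A2 : Set V} (hdisj : Disjoint A1 A2)
    (hsepa : ∀ a ∈ A1, ∀ b ∈ A2, ¬ G.Adj a b) :
    domNumOn G (A1 ∪ A2) = domNumOn G A1 + domNumOn G A2 := by
  apply le_antisymm
  · obtain ⟨S1, ⟨h1s, h1d⟩, hc1⟩ := exists_minDom G A1
    obtain ⟨S2, ⟨h2s, h2d⟩, hc2⟩ := exists_minDom G A2
    have hdom : IsDomOn G (A1 ∪ A2) (S1 ∪ S2) := by
      constructor
      · exact Set.union_subset_union h1s h2s
      · rintro v (hv | hv)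
        · obtain ⟨s, hs, h⟩ := h1d v hv; exact ⟨s, Or.inl hs, h⟩
        · obtain ⟨s, hs, h⟩ := h2d v hv; exact ⟨s, Or.inr hs, h⟩
    calc domNumOn G (A1 ∪ A2) ≤ (S1 ∪ S2).ncard := domNumOn_le G hdom
      _ ≤ S1.ncard + S2.ncard := Set.ncard_union_le _ _
      _ = _ := by rw [hc1, hc2]
  · obtain ⟨S, ⟨hSs, hSd⟩, hc⟩ := exists_minDom G (A1 ∪ A2)
    have h1 : IsDomOn G A1 (S ∩ A1) := by
      constructor
      · exact inter_subset_right
      · intro v hv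
        obtain ⟨s, hs, h⟩ := hSd v (Or.inl hv)
        rcases hSs hs with hs1 | hs2
        · exact ⟨s, ⟨hs, hs1⟩, h⟩
        · exfalso
          rcases h with rfl | hadj
          · exact Set.disjoint_left.mp hdisj hv hs2
          · exact hsepa v hv s hs2 hadj.symm
    have h2 : IsDomOn G A2 (S ∩ A2) := by
      constructor
      · exact inter_subset_right
      · intro v hv
        obtain ⟨s, hs, h⟩ := hSd v (Or.inr hv)
        rcases hSs hs with hs1 | hs2
        · exfalso
          rcases h with rfl | hadj
          · exact Set.disjoint_left.mp hdisj hs1 hv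
          · exact hsepa s hs1 v hv hadj
        · exact ⟨s, ⟨hs, hs2⟩, h⟩
    have hd2 : Disjoint (S ∩ A1) (S ∩ A2) :=
      hdisj.mono inter_subset_right inter_subset_right
    calc domNumOn G A1 + domNumOn G A2 ≤ (S ∩ A1).ncard + (S ∩ A2).ncard :=
          add_le_add (domNumOn_le G h1) (domNumOn_le G h2)
      _ = ((S ∩ A1) ∪ (S ∩ A2)).ncard := (Set.ncard_union_eq hd2 (toFinite _) (toFinite _)).symm
      _ ≤ S.ncard := Set.ncard_le_ncard (by
          intro v hv; rcases hv with hv | hv <;> exact hv.1) (toFinite _)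
      _ = _ := hc

end Aux

/-- Coalescence: if G is weak bicritical, then γ(G) = γ(H₁) + γ(H₂) − 1. -/
theorem stmt_13 {V : Type*} [Fintype V] (G : SimpleGraph V) (x : V) (V1 V2 : Set V)
    (hunion : V1 ∪ V2 = Set.univ) (hinter : V1 ∩ V2 = {x})
    (hsep : ∀ a ∈ V1, ∀ b ∈ V2, a ≠ x → b ≠ x → ¬ G.Adj a b)
    (hx1 : ∃ a ∈ V1, G.Adj x a) (hx2 : ∃ b ∈ V2, G.Adj x b)
    (hwb : WeakBicriticalOn G Set.univ) :
    domNum G = domNumOn G V1 + domNumOn G V2 - 1 := by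
  obtain ⟨a, haV1, hxa⟩ := hx1
  obtain ⟨b, hbV2, hxb⟩ := hx2
  have hxV1 : x ∈ V1 := by
    have : x ∈ V1 ∩ V2 := by rw [hinter]; exact rfl
    exact this.1
  have hxV2 : x ∈ V2 := by
    have : x ∈ V1 ∩ V2 := by rw [hinter]; exact rfl
    exact this.2
  have hax : a ≠ x := hxa.ne'
  have hbx : b ≠ x := hxb.ne'
  have haV2 : a ∉ V2 := by
    intro h
    have : a ∈ V1 ∩ V2 := ⟨haV1, h⟩
    rw [hinter] at this
    exact hax this
  have hbV1 : b ∉ V1 := by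
    intro h
    have : b ∈ V1 ∩ V2 := ⟨h, hbV2⟩
    rw [hinter] at this
    exact hbx this
  -- general facts about the split
  have hmemx : ∀ v : V, v ∈ V1 ∩ V2 → v = x := by
    intro v hv; rw [hinter] at hv; exact hv
  have hdisj : Disjoint (V1 \ {x}) (V2 \ {x}) := by
    rw [Set.disjoint_left]
    rintro v ⟨hv1, hvx⟩ ⟨hv2, _⟩
    exact hvx (hmemx v ⟨hv1, hv2⟩)
  have hsep' : ∀ u ∈ V1 \ {x}, ∀ w ∈ V2 \ {x}, ¬ G.Adj u w := by
    rintro u ⟨hu1, hux⟩ w ⟨hw2, hwx⟩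
    exact hsep u hu1 w hw2 hux hwx
  have hUdiff : (Set.univ : Set V) \ {x} = (V1 \ {x}) ∪ (V2 \ {x}) := by
    ext v
    simp only [Set.mem_diff, Set.mem_univ, true_and, Set.mem_union, Set.mem_singleton_iff]
    constructor
    · intro hv
      have : v ∈ V1 ∪ V2 := by rw [hunion]; trivial
      rcases this with h | h
      · exact Or.inl ⟨h, hv⟩
      · exact Or.inr ⟨h, hv⟩
    · rintro (⟨_, h⟩ | ⟨_, h⟩) <;> exact h
  set g := domNumOn G (Set.univ : Set V) with hg
  set d1 := domNumOn G V1 with hd1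
  set d2 := domNumOn G V2 with hd2
  set d1x := domNumOn G (V1 \ {x}) with hd1x
  set d2x := domNumOn G (V2 \ {x}) with hd2x
  have hC : domNumOn G ((Set.univ : Set V) \ {x}) = d1x + d2x := by
    rw [hUdiff, domNumOn_union G hdisj hsep']
  have hle : domNumOn G ((Set.univ : Set V) \ {x}) ≤ g := hwb.1 x (Set.mem_univ x)
  rcases hle.lt_or_eq with hlt | heq
  · -- Case: x is critical in G
    have hgub : g ≤ d1x + d2x + 1 := by
      have := domNumOn_le_diff_add_one G (Set.univ : Set V) x
      rw [hC] at this
      exact this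
    have hgeq : g = d1x + d2x + 1 := by
      rw [hC] at hlt
      omega
    have hX : g ≤ d1x + d2 := by
      obtain ⟨S1, ⟨h1s, h1d⟩, hc1⟩ := exists_minDom G (V1 \ {x})
      obtain ⟨S2, ⟨h2s, h2d⟩, hc2⟩ := exists_minDom G V2
      have hdom : IsDomOn G (Set.univ : Set V) (S1 ∪ S2) := by
        constructor
        · exact fun _ _ => Set.mem_univ _
        · intro v _
          have hv : v ∈ V1 ∪ V2 := by rw [hunion]; trivial
          rcases hv with hv | hv
          · by_cases hvx : v = x
            · obtain ⟨s, hs, h⟩ := h2d v (hvx ▸ hxV2)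
              exact ⟨s, Or.inr hs, h⟩
            · obtain ⟨s, hs, h⟩ := h1d v ⟨hv, hvx⟩
              exact ⟨s, Or.inl hs, h⟩
          · obtain ⟨s, hs, h⟩ := h2d v hv
            exact ⟨s, Or.inr hs, h⟩
      calc g ≤ (S1 ∪ S2).ncard := domNumOn_le G hdom
        _ ≤ S1.ncard + S2.ncard := Set.ncard_union_le _ _
        _ = d1x + d2 := by rw [hc1, hc2]
    have hY : g ≤ d1 + d2x := by
      obtain ⟨S1, ⟨h1s, h1d⟩, hc1⟩ := exists_minDom G V1
      obtain ⟨S2, ⟨h2s, h2d⟩, hc2⟩ := exists_minDom G (V2 \ {x})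
      have hdom : IsDomOn G (Set.univ : Set V) (S1 ∪ S2) := by
        constructor
        · exact fun _ _ => Set.mem_univ _
        · intro v _
          have hv : v ∈ V1 ∪ V2 := by rw [hunion]; trivial
          rcases hv with hv | hv
          · obtain ⟨s, hs, h⟩ := h1d v hv
            exact ⟨s, Or.inl hs, h⟩
          · by_cases hvx : v = x
            · obtain ⟨s, hs, h⟩ := h1d v (hvx ▸ hxV1)
              exact ⟨s, Or.inl hs, h⟩
            · obtain ⟨s, hs, h⟩ := h2d v ⟨hv, hvx⟩
              exact ⟨s, Or.inr hs, h⟩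
      calc g ≤ (S1 ∪ S2).ncard := domNumOn_le G hdom
        _ ≤ S1.ncard + S2.ncard := Set.ncard_union_le _ _
        _ = d1 + d2x := by rw [hc1, hc2]
    have h1ub : d1 ≤ d1x + 1 := domNumOn_le_diff_add_one G V1 x
    have h2ub : d2 ≤ d2x + 1 := domNumOn_le_diff_add_one G V2 x
    show g = d1 + d2 - 1
    omega
  · -- Case: γ(G−x) = γ(G); derive a contradiction.
    exfalso
    have hcrit := hwb.2 x (Set.mem_univ x) heq
    -- criticality at a
    have hca := hcrit a ⟨Set.mem_univ a, hax⟩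
    have hcb := hcrit b ⟨Set.mem_univ b, hbx⟩
    have hEa : ((Set.univ : Set V) \ {x}) \ {a} = ((V1 \ {x}) \ {a}) ∪ (V2 \ {x}) := by
      rw [hUdiff]
      ext v
      simp only [Set.mem_diff, Set.mem_union, Set.mem_singleton_iff]
      constructor
      · rintro ⟨h | h, hva⟩
        · exact Or.inl ⟨h, hva⟩
        · exact Or.inr h
      · rintro (⟨⟨h1, h2⟩, h3⟩ | ⟨h1, h2⟩)
        · exact ⟨Or.inl ⟨h1, h2⟩, h3⟩
        · refine ⟨Or.inr ⟨h1, h2⟩, ?_⟩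
          intro hva
          exact haV2 (hva ▸ h1)
    have hEb : ((Set.univ : Set V) \ {x}) \ {b} = (V1 \ {x}) ∪ ((V2 \ {x}) \ {b}) := by
      rw [hUdiff]
      ext v
      simp only [Set.mem_diff, Set.mem_union, Set.mem_singleton_iff]
      constructor
      · rintro ⟨h | h, hvb⟩
        · exact Or.inl h
        · exact Or.inr ⟨h, hvb⟩
      · rintro (⟨h1, h2⟩ | ⟨⟨h1, h2⟩, h3⟩)
        · refine ⟨Or.inl ⟨h1, h2⟩, ?_⟩
          intro hvb
          exact hbV1 (hvb ▸ h1)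
        · exact ⟨Or.inr ⟨h1, h2⟩, h3⟩
    have hdisja : Disjoint ((V1 \ {x}) \ {a}) (V2 \ {x}) :=
      hdisj.mono (Set.diff_subset) le_rfl
    have hdisjb : Disjoint (V1 \ {x}) ((V2 \ {x}) \ {b}) :=
      hdisj.mono le_rfl (Set.diff_subset)
    have hsepa' : ∀ u ∈ (V1 \ {x}) \ {a}, ∀ w ∈ V2 \ {x}, ¬ G.Adj u w :=
      fun u hu w hw => hsep' u hu.1 w hw
    have hsepb' : ∀ u ∈ V1 \ {x}, ∀ w ∈ (V2 \ {x}) \ {b}, ¬ G.Adj u w :=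
      fun u hu w hw => hsep' u hu w hw.1
    unfold IsCritVertexOn at hca hcb
    rw [hEa, domNumOn_union G hdisja hsepa', hC] at hca
    rw [hEb, domNumOn_union G hdisjb hsepb', hC] at hcb
    set g1a := domNumOn G ((V1 \ {x}) \ {a}) with hg1a
    set g2b := domNumOn G ((V2 \ {x}) \ {b}) with hg2b
    have ha' : g1a + 1 ≤ d1x := by omega
    have hb' : g2b + 1 ≤ d2x := by omega
    -- build a small dominating set of G
    obtain ⟨T1, ⟨h1s, h1d⟩, hc1⟩ := exists_minDom G ((V1 \ {x}) \ {a})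
    obtain ⟨T2, ⟨h2s, h2d⟩, hc2⟩ := exists_minDom G ((V2 \ {x}) \ {b})
    have hdom : IsDomOn G (Set.univ : Set V) (insert x (T1 ∪ T2)) := by
      constructor
      · exact fun _ _ => Set.mem_univ _
      · intro v _
        have hv : v ∈ V1 ∪ V2 := by rw [hunion]; trivial
        by_cases hvx : v = x
        · exact ⟨x, mem_insert _ _, Or.inl hvx.symm⟩
        · by_cases hva : v = a
          · exact ⟨x, mem_insert _ _, Or.inr (hva ▸ hxa)⟩
          · by_cases hvb : v = b
            · exact ⟨x, mem_insert _ _, Or.inr (hvb ▸ hxb)⟩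
            · rcases hv with hv | hv
              · obtain ⟨s, hs, h⟩ := h1d v ⟨⟨hv, hvx⟩, hva⟩
                exact ⟨s, mem_insert_of_mem _ (Or.inl hs), h⟩
              · obtain ⟨s, hs, h⟩ := h2d v ⟨⟨hv, hvx⟩, hvb⟩
                exact ⟨s, mem_insert_of_mem _ (Or.inr hs), h⟩
    have hbound : g ≤ g1a + g2b + 1 := by
      calc g ≤ (insert x (T1 ∪ T2)).ncard := domNumOn_le G hdom
        _ ≤ (T1 ∪ T2).ncard + 1 := Set.ncard_insert_le _ _
        _ ≤ T1.ncard + T2.ncard + 1 := by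
            have := Set.ncard_union_le T1 T2
            omega
        _ = g1a + g2b + 1 := by rw [hc1, hc2]
    rw [hC] at heq
    omega
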